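/- arXiv:2412.18215 — 2 statements merged into one kernel-verified Lean document; each statement's English description precedes it below -/
import Mathlib

section
/- Let $F : \mathbb{R} \to [0,1]$ be the CDF of the uniform distribution on $[-a,b]$ with $a, b > 0$, i.e., $F(t) = (t+a)/(a+b)$ for $t \in [-a,b]$, $F(t)=0$ for $t<-a$, $F(t)=1$ for $t>b$. Let $A$ be the piecewise-constant nondecreasing function that places mass $\bar\mu(a+b)$ at each of the points $s_k = k a + (k-1) b$ for $k = 1, \dots, N$, with $T = N(a+b)$. Then for all $t \in [0,T]$, $\sum_{k=1}^{N} \bar\mu(a+b) F(t - s_k) = \bar\mu t$. -/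
/-!
Since `t - s_k + a = t - k(a+b)`, the term `(a+b) F(t - s_k)` is `t - k(a+b)` clamped to
`[0, a+b]`. These ramps of width `a+b` placed end to end add up to `t` clamped to
`[0, N(a+b)]`, which is `t` itself on `[0, T]`.
-/

def ramp (c x : ℝ) : ℝ := max 0 (min x c)

lemma ramp_of_mem_Icc {c x : ℝ} (hx : x ∈ Set.Icc 0 c) : ramp c x = x := by
  simp only [ramp, min_eq_left hx.2, max_eq_right hx.1]

lemma ramp_add {c d : ℝ} (hc : 0 ≤ c) (hd : 0 ≤ d) (x : ℝ) :
    ramp (c + d) x = ramp c x + ramp d (x - c) := by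
  simp only [ramp, max_def, min_def]
  split_ifs <;> linarith

lemma sum_range_ramp_sub {c : ℝ} (hc : 0 ≤ c) (N : ℕ) (x : ℝ) :
    ∑ k ∈ Finset.range N, ramp c (x - k * c) = ramp (N * c) x := by
  induction N with
  | zero => simp [ramp]
  | succ N ih =>
    rw [Finset.sum_range_succ, ih, Nat.cast_succ, add_one_mul,
      ramp_add (by positivity) hc]

lemma mul_uniformCDF_eq_ramp {a b : ℝ} (hab : 0 < a + b) (F : ℝ → ℝ)
    (hF : ∀ t, F t = if t < -a then 0 else if t ≤ b then (t + a) / (a + b) else 1) (t : ℝ) :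
    (a + b) * F t = ramp (a + b) (t + a) := by
  rw [hF, ramp]
  split_ifs with h₁ h₂
  · rw [mul_zero, max_eq_left (by linarith [min_le_left (t + a) (a + b)])]
  · rw [mul_div_cancel₀ _ hab.ne', min_eq_left (by linarith), max_eq_right (by linarith)]
  · rw [mul_one, min_eq_right (by linarith), max_eq_right hab.le]

theorem stmt5_general (a b μ : ℝ) (ha : 0 < a) (hb : 0 < b)
    (N : ℕ) (T : ℝ) (hT : T = N * (a + b))
    (F : ℝ → ℝ)
    (hF : ∀ t, F t = if t < -a then 0 else if t ≤ b then (t + a) / (a + b) else 1) :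
    ∀ t ∈ Set.Icc (0:ℝ) T,
      ∑ k ∈ Finset.range N, μ * (a + b) * F (t - (((k:ℝ)+1) * a + (k:ℝ) * b)) = μ * t := by
  intro t ht
  have hab : 0 < a + b := add_pos ha hb
  have hshift (k : ℕ) : t - (((k:ℝ)+1) * a + (k:ℝ) * b) + a = t - k * (a + b) := by ring
  calc ∑ k ∈ Finset.range N, μ * (a + b) * F (t - (((k:ℝ)+1) * a + (k:ℝ) * b))
      = μ * ∑ k ∈ Finset.range N, ramp (a + b) (t - k * (a + b)) := by
        simp only [Finset.mul_sum, mul_assoc, mul_uniformCDF_eq_ramp hab F hF, hshift]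
    _ = μ * t := by
        rw [sum_range_ramp_sub hab.le, ramp_of_mem_Icc (hT ▸ ht)]

/-- Uniform unpunctuality on `[-a,b]`: placing mass `μ(a+b)` at each point
`s_k = k a + (k-1) b`, `k = 1, …, N`, with `T = N(a+b)`, yields the linear fluid
arrival function: `∑_k μ(a+b) F(t - s_k) = μ t` for all `t ∈ [0,T]`. -/
theorem stmt5 (a b μ : ℝ) (ha : 0 < a) (hb : 0 < b) (hμ : 0 < μ)
    (N : ℕ) (hN : 1 ≤ N) (T : ℝ) (hT : T = N * (a + b))
    (F : ℝ → ℝ)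
    (hF : ∀ t, F t = if t < -a then 0 else if t ≤ b then (t + a) / (a + b) else 1) :
    ∀ t ∈ Set.Icc (0:ℝ) T,
      ∑ k ∈ Finset.range N, μ * (a + b) * F (t - (((k:ℝ)+1) * a + (k:ℝ) * b)) = μ * t :=
  stmt5_general a b μ ha hb N T hT F hF
end

section
/- Let $h, \hat{h} : [0,T] \to \mathbb{R}$ be bounded functions with $h(0), \hat h(0) \geq 0$, and define the discrete regulator $\hat{i} = \mu^{-1} \max_{0 \leq k \leq K} \max\{\mu t_k - \hat{h}(t_k), 0\}$ with $t_k = kT/K$, and the continuous regulator $i = \mu^{-1} \sup_{0 \leq s \leq T} \max\{\mu s - h(s), 0\}$. If $h$ is nondecreasing, then $|i - \hat{i}| \leq \mu^{-1}\left( \sup_{t \in [0,T]} |h(t) - \hat{h}(t)| + \mu T/K \right)$. -/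
/-!
A grid value `μ t_k - ĥ(t_k)` is within `ε` of the continuous value at `t_k`. Conversely, for
`s ∈ [t_k, t_k + T/K]` monotonicity of `h` gives `μ s - h(s) ≤ μ t_k - h(t_k) + μ T/K`, so every
continuous value is within `ε + μ T/K` of a grid value. Two suprema each of whose values is
dominated by a value of the other up to `c` differ by at most `c`.
-/

open Set

theorem abs_sSup_image_sub_sup'_le {α ι : Type*} {f : α → ℝ} {A : Set α} {g : ι → ℝ}
    {I : Finset ι} (hI : I.Nonempty) {c : ℝ} (hA : A.Nonempty) (hf : BddAbove (f '' A))
    (hgf : ∀ i ∈ I, ∃ a ∈ A, g i ≤ f a + c) (hfg : ∀ a ∈ A, ∃ i ∈ I, f a ≤ g i + c) :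
    |sSup (f '' A) - I.sup' hI g| ≤ c := by
  rw [abs_sub_le_iff]
  constructor
  · have : sSup (f '' A) ≤ I.sup' hI g + c := by
      refine csSup_le (hA.image f) ?_
      rintro _ ⟨a, ha, rfl⟩
      obtain ⟨i, hi, hle⟩ := hfg a ha
      linarith [I.le_sup' g hi]
    linarith
  · have : I.sup' hI g ≤ sSup (f '' A) + c := by
      refine Finset.sup'_le hI g fun i hi => ?_
      obtain ⟨a, ha, hle⟩ := hgf i hi
      linarith [le_csSup hf (mem_image_of_mem f ha)]
    linarith

theorem max_zero_le_max_zero_add {a b c : ℝ} (hc : 0 ≤ c) (hab : a ≤ b + c) :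
    max a 0 ≤ max b 0 + c :=
  max_le (by linarith [le_max_left b 0]) (by linarith [le_max_right b 0])

theorem natCast_mul_div_mem_Icc {T : ℝ} (hT : 0 ≤ T) {K k : ℕ} (hK : 0 < K) (hk : k ≤ K) :
    (k : ℝ) * T / K ∈ Icc 0 T := by
  have hK' : (0 : ℝ) < K := Nat.cast_pos.mpr hK
  refine ⟨by positivity, (div_le_iff₀ hK').mpr ?_⟩
  rw [mul_comm T]
  exact mul_le_mul_of_nonneg_right (Nat.cast_le.mpr hk) hT

theorem exists_grid_point_le_le_add {T s : ℝ} (hT : 0 < T) {K : ℕ} (hK : 0 < K)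
    (hs : s ∈ Icc 0 T) : ∃ k ≤ K, (k : ℝ) * T / K ≤ s ∧ s ≤ (k : ℝ) * T / K + T / K := by
  have hδ : 0 < T / K := div_pos hT (Nat.cast_pos.mpr hK)
  set k := ⌊s / (T / K)⌋₊
  have hk_le : (k : ℝ) ≤ s / (T / K) := Nat.floor_le (div_nonneg hs.1 hδ.le)
  have hk_lt : s / (T / K) < k + 1 := Nat.lt_floor_add_one _
  have hlow : (k : ℝ) * (T / K) ≤ s := (le_div_iff₀ hδ).mp hk_le
  have hhigh : s < (k + 1) * (T / K) := (div_lt_iff₀ hδ).mp hk_lt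
  have hkK : k ≤ K := by
    have : s / (T / K) ≤ K := by
      rw [div_le_iff₀ hδ, mul_div_cancel₀ T (Nat.cast_pos.mpr hK).ne']
      exact hs.2
    exact_mod_cast hk_le.trans this
  refine ⟨k, hkK, ?_, ?_⟩ <;> rw [mul_div_assoc] <;> linarith

theorem stmt13_general (μ T ε : ℝ) (hμ : 0 < μ) (hT : 0 < T) (hε : 0 ≤ ε)
    (K : ℕ) (hK : 0 < K)
    (h hhat : ℝ → ℝ)
    (hbddh : BddAbove ((fun s => max (μ * s - h s) 0) '' Icc 0 T))
    (hmono : MonotoneOn h (Icc 0 T))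
    (hclose : ∀ t ∈ Icc (0:ℝ) T, |h t - hhat t| ≤ ε)
    (i ihat : ℝ)
    (hi : i = μ⁻¹ * sSup ((fun s => max (μ * s - h s) 0) '' Icc 0 T))
    (hihat : ihat = μ⁻¹ * (Finset.range (K+1)).sup' ⟨0, Finset.mem_range.mpr (Nat.succ_pos K)⟩
        (fun k => max (μ * (k * T / K) - hhat (k * T / K)) 0)) :
    |i - ihat| ≤ μ⁻¹ * (ε + μ * T / K) := by
  rw [hi, hihat, ← mul_sub, abs_mul, abs_of_pos (inv_pos.mpr hμ)]
  gcongr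
  have hstep : 0 ≤ μ * T / K := by positivity
  refine abs_sSup_image_sub_sup'_le _ (nonempty_Icc.mpr hT.le) hbddh ?grid ?cont
  case grid =>
    intro k hk
    have hmem := natCast_mul_div_mem_Icc hT.le hK (Nat.lt_succ_iff.mp (Finset.mem_range.mp hk))
    have hclose_k := (abs_le.mp (hclose _ hmem)).2
    refine ⟨_, hmem, max_zero_le_max_zero_add (by positivity) ?_⟩
    linarith
  case cont =>
    intro s hs
    obtain ⟨k, hkK, hks, hsk⟩ := exists_grid_point_le_le_add hT hK hs
    have hmem := natCast_mul_div_mem_Icc hT.le hK hkK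
    have hclose_k := (abs_le.mp (hclose _ hmem)).1
    have hmono_k := hmono hmem hs hks
    have hμs : μ * s ≤ μ * (k * T / K) + μ * T / K := by
      rw [mul_div_assoc μ T, ← mul_add]
      exact mul_le_mul_of_nonneg_left hsk hμ.le
    refine ⟨k, Finset.mem_range.mpr (Nat.lt_succ_of_le hkK),
      max_zero_le_max_zero_add (by positivity) ?_⟩
    linarith

/-- Error between the continuous Skorokhod regulator of a nondecreasing `h` and the
discrete grid regulator of an approximation `ĥ`:
`|i - î| ≤ μ⁻¹ (sup |h - ĥ| + μ T/K)`, stated with a uniform bound `ε`. -/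
theorem stmt13 (μ T ε : ℝ) (hμ : 0 < μ) (hT : 0 < T) (hε : 0 ≤ ε)
    (K : ℕ) (hK : 0 < K)
    (h hhat : ℝ → ℝ)
    (hbddh : BddAbove ((fun s => max (μ * s - h s) 0) '' Icc 0 T))
    (hmono : MonotoneOn h (Icc 0 T))
    (h0 : 0 ≤ h 0) (hhat0 : 0 ≤ hhat 0)
    (hclose : ∀ t ∈ Icc (0:ℝ) T, |h t - hhat t| ≤ ε)
    (i ihat : ℝ)
    (hi : i = μ⁻¹ * sSup ((fun s => max (μ * s - h s) 0) '' Icc 0 T))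
    (hihat : ihat = μ⁻¹ * (Finset.range (K+1)).sup' ⟨0, Finset.mem_range.mpr (Nat.succ_pos K)⟩
        (fun k => max (μ * (k * T / K) - hhat (k * T / K)) 0)) :
    |i - ihat| ≤ μ⁻¹ * (ε + μ * T / K) :=
  stmt13_general μ T ε hμ hT hε K hK h hhat hbddh hmono hclose i ihat hi hihat
end
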